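/- arXiv:1705.05905 — 4 statements merged into one kernel-verified Lean document; each statement's English description precedes it below -/
import Mathlib

section
/- Let p : [0,∞) → ℝ be continuous on [0,∞), continuously differentiable on (0,∞), with p(0) = 0, p'(ρ) > 0 for all ρ > 0, lim_{ρ→∞} p'(ρ)/ρ^{γ−1} = a₀ for some constants a₀ > 0 and γ > 3/2, and with s ↦ p(s)/s² integrable on (0,1). Then for any constants 0 < a < b < ∞ there exists a constant C = C(a,b) > 0 such that for every ρ ∈ [0,∞) and every r ∈ [a,b] the following holds: if a/2 ≤ ρ ≤ 2b then E(ρ,r) ≥ C (ρ − r)², while if ρ < a/2 or ρ > 2b then E(ρ,r) ≥ C (1 + ρ^γ). -/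
/-!
For `ρ, r > 0` the relative energy is `E(ρ, r) = ρ ∫_r^ρ (p s - p r) / s² ds`, and since `p` is
increasing the integrand has the sign of `s - r`, so `E` dominates `ρ` times the integral over any
subinterval lying between `r` and `ρ`. On `[a/2, 2b]` the derivative `p'` is bounded below by some
`m > 0`, so the integrand is at least `m (s - r) / (2b)²` and `E ≥ C (ρ - r)²`. For `ρ < a/2` the
subinterval `[ρ, 3a/4]` bounds `E` below by a positive constant (at `ρ = 0`, `E = p r`). For
`ρ > 2b` the subinterval `[3ρ/4, ρ]` gives `E ≥ (p (3ρ/4) - p b) / 3`, and `p s ≳ s^γ`, obtained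
by integrating `p' ≳ s^(γ-1)`, makes this at least `C (1 + ρ^γ)`.
-/

open MeasureTheory Filter Set

/-- The pressure potential `H(ρ) = ρ ∫₀^ρ p(s)/s² ds`. -/
noncomputable def Hpot (p : ℝ → ℝ) (ρ : ℝ) : ℝ := ρ * ∫ s in (0:ℝ)..ρ, p s / s ^ 2

/-- The relative energy `E(ρ,r) = H(ρ) − H'(r)(ρ−r) − H(r)`. -/
noncomputable def Erel (p : ℝ → ℝ) (ρ r : ℝ) : ℝ :=
  Hpot p ρ - deriv (Hpot p) r * (ρ - r) - Hpot p r

open intervalIntegral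

lemma integral_nonneg_of_forall_sub_mul_nonneg {f : ℝ → ℝ} {a b : ℝ}
    (h : ∀ s ∈ uIcc a b, 0 ≤ (b - a) * f s) : 0 ≤ ∫ s in a..b, f s := by
  rcases lt_trichotomy a b with hab | rfl | hab
  · exact integral_nonneg hab.le fun s hs =>
      nonneg_of_mul_nonneg_right (h s (Icc_subset_uIcc hs)) (sub_pos.2 hab)
  · simp
  · rw [integral_symm, ← intervalIntegral.integral_neg]
    refine integral_nonneg hab.le fun s hs => ?_
    have := h s (Icc_subset_uIcc' hs)
    nlinarith

lemma exists_pos_mul_sub_le_sub {p p' : ℝ → ℝ} {x y : ℝ}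
    (hderiv : ∀ s ∈ Icc x y, HasDerivAt p (p' s) s) (hcont : ContinuousOn p' (Icc x y))
    (hpos : ∀ s ∈ Icc x y, 0 < p' s) :
    ∃ m > 0, ∀ u ∈ Icc x y, ∀ v ∈ Icc x y, u ≤ v → m * (v - u) ≤ p v - p u := by
  obtain ⟨m, hm, hmle⟩ := isCompact_Icc.exists_forall_le' hcont hpos
  refine ⟨m, hm, (convex_Icc x y).mul_sub_le_image_sub_of_le_deriv
    (fun s hs => (hderiv s hs).continuousAt.continuousWithinAt)
    (fun s hs => (hderiv s (interior_subset hs)).differentiableAt.differentiableWithinAt)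
    fun s hs => ?_⟩
  rw [(hderiv s (interior_subset hs)).deriv]
  exact hmle s (interior_subset hs)

lemma exists_pos_eventually_mul_rpow_le {p p' : ℝ → ℝ} {γ a₀ : ℝ} (hγ : 0 < γ) (ha₀ : 0 < a₀)
    (hp_deriv : ∀ x : ℝ, 0 < x → HasDerivAt p (p' x) x)
    (hp_lim : Tendsto (fun ρ : ℝ => p' ρ / ρ ^ (γ - 1)) atTop (nhds a₀)) :
    ∃ c > 0, ∀ᶠ s in atTop, c * s ^ γ ≤ p s := by
  obtain ⟨M, hM⟩ := ((hp_lim.eventually (eventually_ge_nhds (half_lt_self ha₀))).and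
    (eventually_gt_atTop 0)).exists_forall_of_atTop
  have hM0 : 0 < M := (hM M le_rfl).2
  -- `p` outgrows the primitive `a₀ / (2γ) s^γ` of its asymptotic lower bound `a₀ / 2 s^(γ-1)`
  set q : ℝ → ℝ := fun s => p s - a₀ / (2 * γ) * s ^ γ
  have hq_deriv : ∀ s, M ≤ s → HasDerivAt q (p' s - a₀ / (2 * γ) * (γ * s ^ (γ - 1))) s :=
    fun s hs => (hp_deriv s (hM0.trans_le hs)).sub
      ((Real.hasDerivAt_rpow_const (Or.inl (hM0.trans_le hs).ne')).const_mul _)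
  have hq : MonotoneOn q (Ici M) := by
    refine monotoneOn_of_hasDerivWithinAt_nonneg (convex_Ici M)
      (fun s hs => (hq_deriv s hs).continuousAt.continuousWithinAt)
      (fun s hs => (hq_deriv s (interior_subset hs)).hasDerivWithinAt) fun s hs => ?_
    rw [interior_Ici] at hs
    obtain ⟨hslope, hs0⟩ := hM s hs.le
    have := (le_div_iff₀ (Real.rpow_pos_of_pos hs0 _)).1 hslope
    field_simp
    linarith
  refine ⟨a₀ / (4 * γ), by positivity, ?_⟩
  filter_upwards [eventually_ge_atTop M,
    ((tendsto_rpow_atTop hγ).const_mul_atTop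
      (by positivity : 0 < a₀ / (4 * γ))).eventually_ge_atTop (-q M)] with s hs hlarge
  have hqs := hq self_mem_Ici hs hs
  have hsplit : a₀ / (2 * γ) * s ^ γ = a₀ / (4 * γ) * s ^ γ + a₀ / (4 * γ) * s ^ γ := by ring
  simp only [q] at hqs
  linarith

lemma MonotoneOn.exists_pos_mul_le_of_eventually {f w : ℝ → ℝ} {x₀ : ℝ}
    (hf : MonotoneOn f (Ici x₀)) (hf₀ : 0 < f x₀) (hw : MonotoneOn w (Ici x₀)) (hw₀ : 0 < w x₀)
    (hev : ∃ c > 0, ∀ᶠ x in atTop, c * w x ≤ f x) :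
    ∃ C > 0, ∀ x, x₀ ≤ x → C * w x ≤ f x := by
  obtain ⟨c, hc, hev⟩ := hev
  obtain ⟨R, hR⟩ := (hev.and (eventually_ge_atTop x₀)).exists_forall_of_atTop
  have hR₀ : x₀ ≤ R := (hR R le_rfl).2
  have hwR : 0 < w R := hw₀.trans_le (hw self_mem_Ici hR₀ hR₀)
  refine ⟨min c (f x₀ / w R), lt_min hc (div_pos hf₀ hwR), fun x hx => ?_⟩
  have hwx : 0 ≤ w x := hw₀.le.trans (hw self_mem_Ici hx hx)
  rcases le_total R x with hRx | hxR
  · exact (mul_le_mul_of_nonneg_right (min_le_left _ _) hwx).trans (hR x hRx).1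
  · calc min c (f x₀ / w R) * w x ≤ f x₀ / w R * w R :=
          mul_le_mul (min_le_right _ _) (hw hx hR₀ hxR) hwx (div_pos hf₀ hwR).le
      _ = f x₀ := div_mul_cancel₀ _ hwR.ne'
      _ ≤ f x := hf self_mem_Ici hx hx

section

variable {p : ℝ → ℝ} {ρ r u v γ a b : ℝ}

lemma continuousOn_div_sq (hp : ContinuousOn p (Ioi 0)) :
    ContinuousOn (fun s => p s / s ^ 2) (Ioi 0) :=
  hp.div (continuousOn_pow 2) fun _ hs => pow_ne_zero 2 (ne_of_gt hs)

lemma intervalIntegrable_div_sq (hp : ContinuousOn p (Ioi 0)) (hu : 0 < u) (hv : 0 < v) :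
    IntervalIntegrable (fun s => p s / s ^ 2) volume u v :=
  ((continuousOn_div_sq hp).mono fun _ hs => (lt_min hu hv).trans_le hs.1).intervalIntegrable

lemma intervalIntegrable_div_sq_zero (hp : ContinuousOn p (Ioi 0))
    (hint : IntegrableOn (fun s => p s / s ^ 2) (Ioo 0 1)) (hv : 0 ≤ v) :
    IntervalIntegrable (fun s => p s / s ^ 2) volume 0 v := by
  rcases hv.eq_or_lt with rfl | hv
  · exact IntervalIntegrable.refl
  have h01 : IntervalIntegrable (fun s => p s / s ^ 2) volume 0 1 :=
    (intervalIntegrable_iff_integrableOn_Ioo_of_le zero_le_one).2 hint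
  exact h01.trans (intervalIntegrable_div_sq hp one_pos hv)

lemma integral_const_div_sq (c : ℝ) (hu : 0 < u) (hv : 0 < v) :
    ∫ s in u..v, c / s ^ 2 = c * (u⁻¹ - v⁻¹) := by
  have hderiv : ∀ s ∈ uIcc u v, HasDerivAt (fun x => -c * x⁻¹) (c / s ^ 2) s := fun s hs => by
    have hs : s ≠ 0 := ((lt_min hu hv).trans_le hs.1).ne'
    simpa [div_eq_mul_inv] using (hasDerivAt_inv hs).const_mul (-c)
  rw [integral_eq_sub_of_hasDerivAt hderiv
    (intervalIntegrable_div_sq (p := fun _ => c) continuousOn_const hu hv)]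
  ring

lemma mul_inv_sub_inv_le_integral_div_sq {c : ℝ} (hp : ContinuousOn p (Ioi 0)) (hu : 0 < u)
    (huv : u ≤ v) (h : ∀ s ∈ Icc u v, c ≤ p s) :
    c * (u⁻¹ - v⁻¹) ≤ ∫ s in u..v, p s / s ^ 2 := by
  have hv := hu.trans_le huv
  rw [← integral_const_div_sq c hu hv]
  exact integral_mono_on huv (intervalIntegrable_div_sq continuousOn_const hu hv)
    (intervalIntegrable_div_sq hp hu hv) fun s hs =>
      div_le_div_of_nonneg_right (h s hs) (sq_nonneg s)

lemma integral_sub_div_sq_nonneg (hmono : MonotoneOn p (Ioi 0)) (hr : 0 < r) (hu : 0 < u) :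
    0 ≤ ∫ s in r..u, (p s - p r) / s ^ 2 := by
  refine integral_nonneg_of_forall_sub_mul_nonneg fun s hs => ?_
  have hs0 : 0 < s := (lt_min hr hu).trans_le hs.1
  rcases le_total r u with h | h
  · rw [uIcc_of_le h] at hs
    exact mul_nonneg (sub_nonneg.2 h)
      (div_nonneg (sub_nonneg.2 (hmono hr hs0 hs.1)) (sq_nonneg s))
  · rw [uIcc_of_ge h] at hs
    exact mul_nonneg_of_nonpos_of_nonpos (sub_nonpos.2 h)
      (div_nonpos_of_nonpos_of_nonneg (sub_nonpos.2 (hmono hs0 hr hs.2)) (sq_nonneg s))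

variable (hp : ContinuousOn p (Ioi 0)) (hint : IntegrableOn (fun s => p s / s ^ 2) (Ioo 0 1))
include hp hint

lemma hasDerivAt_Hpot (hr : 0 < r) :
    HasDerivAt (Hpot p) ((∫ s in (0:ℝ)..r, p s / s ^ 2) + p r / r) r := by
  have hF := integral_hasDerivAt_right (intervalIntegrable_div_sq_zero hp hint hr.le)
    ((continuousOn_div_sq hp).stronglyMeasurableAtFilter isOpen_Ioi r hr)
    ((continuousOn_div_sq hp).continuousAt (Ioi_mem_nhds hr))
  have hprod : HasDerivAt (Hpot p) (1 * (∫ s in (0:ℝ)..r, p s / s ^ 2) + r * (p r / r ^ 2)) r :=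
    (hasDerivAt_id' r).mul hF
  convert hprod using 1
  field_simp

lemma Erel_eq (hρ : 0 ≤ ρ) (hr : 0 < r) :
    Erel p ρ r = ρ * (∫ s in r..ρ, p s / s ^ 2) - p r * (ρ - r) / r := by
  rw [Erel, (hasDerivAt_Hpot hp hint hr).deriv, Hpot, Hpot,
    ← integral_interval_sub_left (intervalIntegrable_div_sq_zero hp hint hρ)
      (intervalIntegrable_div_sq_zero hp hint hr.le)]
  field_simp
  ring

lemma Erel_zero_left (hr : 0 < r) : Erel p 0 r = p r := by
  rw [Erel_eq hp hint le_rfl hr]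
  field_simp
  ring

lemma Erel_eq_mul_integral (hρ : 0 < ρ) (hr : 0 < r) :
    Erel p ρ r = ρ * ∫ s in r..ρ, (p s - p r) / s ^ 2 := by
  simp_rw [sub_div]
  rw [integral_sub (intervalIntegrable_div_sq hp hr hρ)
    (intervalIntegrable_div_sq continuousOn_const hr hρ), integral_const_div_sq _ hr hρ,
    Erel_eq hp hint hρ.le hr]
  field_simp

lemma mul_integral_le_Erel (hmono : MonotoneOn p (Ioi 0)) (hρ : 0 < ρ) (hr : 0 < r) (hu : 0 < u) :
    ρ * ∫ s in u..ρ, (p s - p r) / s ^ 2 ≤ Erel p ρ r := by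
  have hq : ContinuousOn (fun s => p s - p r) (Ioi 0) := hp.sub continuousOn_const
  rw [Erel_eq_mul_integral hp hint hρ hr, ← integral_add_adjacent_intervals
    (intervalIntegrable_div_sq hq hr hu) (intervalIntegrable_div_sq hq hu hρ)]
  exact mul_le_mul_of_nonneg_left
    (le_add_of_nonneg_left (integral_sub_div_sq_nonneg hmono hr hu)) hρ.le

lemma sub_div_three_le_Erel (hmono : MonotoneOn p (Ioi 0)) (hr : 0 < r) (hrρ : r ≤ 3 / 4 * ρ) :
    (p (3 / 4 * ρ) - p r) / 3 ≤ Erel p ρ r := by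
  have hu : 0 < 3 / 4 * ρ := hr.trans_le hrρ
  have hρ : 0 < ρ := by linarith
  calc (p (3 / 4 * ρ) - p r) / 3
      = ρ * ((p (3 / 4 * ρ) - p r) * ((3 / 4 * ρ)⁻¹ - ρ⁻¹)) := by field_simp; ring
    _ ≤ ρ * ∫ s in 3 / 4 * ρ..ρ, (p s - p r) / s ^ 2 :=
        mul_le_mul_of_nonneg_left (mul_inv_sub_inv_le_integral_div_sq
          (hp.sub continuousOn_const) hu (by linarith)
          fun s hs => sub_le_sub_right (hmono hu (hu.trans_le hs.1) hs.1) _) hρ.le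
    _ ≤ Erel p ρ r := mul_integral_le_Erel hp hint hmono hρ hr hu

lemma sub_mul_one_sub_div_le_Erel (hmono : MonotoneOn p (Ioi 0)) (hρ : 0 < ρ) (hρu : ρ ≤ u)
    (hur : u ≤ r) : (p r - p u) * (1 - ρ / u) ≤ Erel p ρ r := by
  have hu : 0 < u := hρ.trans_le hρu
  have hr : 0 < r := hu.trans_le hur
  calc (p r - p u) * (1 - ρ / u) = ρ * ((p r - p u) * (ρ⁻¹ - u⁻¹)) := by field_simp
    _ ≤ ρ * ∫ s in ρ..u, (p r - p s) / s ^ 2 :=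
        mul_le_mul_of_nonneg_left (mul_inv_sub_inv_le_integral_div_sq
          (continuousOn_const.sub hp) hρ hρu
          fun s hs => sub_le_sub_left (hmono (hρ.trans_le hs.1) hu hs.2) _) hρ.le
    _ = ρ * ∫ s in u..ρ, (p s - p r) / s ^ 2 := by
        rw [integral_symm ρ u, ← intervalIntegral.integral_neg]
        simp only [← neg_div, neg_sub]
    _ ≤ Erel p ρ r := mul_integral_le_Erel hp hint hmono hρ hr hu

lemma mul_sq_le_Erel {x y m : ℝ} (hx : 0 < x) (hm : 0 ≤ m)
    (hlin : ∀ u ∈ Icc x y, ∀ v ∈ Icc x y, u ≤ v → m * (v - u) ≤ p v - p u)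
    (hρ : ρ ∈ Icc x y) (hr : r ∈ Icc x y) :
    x * m / (2 * y ^ 2) * (ρ - r) ^ 2 ≤ Erel p ρ r := by
  have hρ0 : 0 < ρ := hx.trans_le hρ.1
  have hr0 : 0 < r := hx.trans_le hr.1
  have hslope : ∀ u ∈ Icc x y, ∀ v ∈ Icc x y, u ≤ v → ∀ t ∈ Icc x y,
      m / y ^ 2 * (v - u) ≤ (p v - p u) / t ^ 2 := by
    intro u hu v hv huv t ht
    have ht0 : 0 < t := hx.trans_le ht.1
    rw [le_div_iff₀ (by positivity)]
    calc m / y ^ 2 * (v - u) * t ^ 2 ≤ m / y ^ 2 * (v - u) * y ^ 2 :=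
          mul_le_mul_of_nonneg_left (pow_le_pow_left₀ ht0.le ht.2 2)
            (mul_nonneg (by positivity) (sub_nonneg.2 huv))
      _ = m * (v - u) := by field_simp [(ht0.trans_le ht.2).ne']
      _ ≤ p v - p u := hlin u hu v hv huv
  have hpoint : ∀ s ∈ uIcc r ρ,
      0 ≤ (ρ - r) * ((p s - p r) / s ^ 2 - m / y ^ 2 * (s - r)) := by
    intro s hs
    have hsxy : s ∈ Icc x y := uIcc_subset_Icc hr hρ hs
    rcases le_total r ρ with h | h
    · rw [uIcc_of_le h] at hs
      exact mul_nonneg (sub_nonneg.2 h) (sub_nonneg.2 (hslope r hr s hsxy hs.1 s hsxy))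
    · rw [uIcc_of_ge h] at hs
      have := hslope s hsxy r hr hs.2 s hsxy
      refine mul_nonneg_of_nonpos_of_nonpos (sub_nonpos.2 h) ?_
      rw [← neg_sub (p r), neg_div]
      linarith
  have hquad : ∫ s in r..ρ, m / y ^ 2 * (s - r) = m / y ^ 2 * ((ρ - r) ^ 2 / 2) := by
    rw [intervalIntegral.integral_const_mul,
      intervalIntegral.integral_comp_sub_right (fun s => s), integral_id]
    ring
  have hlower : m / y ^ 2 * ((ρ - r) ^ 2 / 2) ≤ ∫ s in r..ρ, (p s - p r) / s ^ 2 := by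
    have hq : ContinuousOn (fun s => p s - p r) (Ioi 0) := hp.sub continuousOn_const
    have hlin_int : IntervalIntegrable (fun s => m / y ^ 2 * (s - r)) volume r ρ := by
      apply Continuous.intervalIntegrable
      fun_prop
    rw [← hquad, ← sub_nonneg, ← integral_sub (intervalIntegrable_div_sq hq hr0 hρ0) hlin_int]
    exact integral_nonneg_of_forall_sub_mul_nonneg hpoint
  rw [Erel_eq_mul_integral hp hint hρ0 hr0]
  calc x * m / (2 * y ^ 2) * (ρ - r) ^ 2 = x * (m / y ^ 2 * ((ρ - r) ^ 2 / 2)) := by ring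
    _ ≤ ρ * ∫ s in r..ρ, (p s - p r) / s ^ 2 :=
        mul_le_mul hρ.1 hlower (by positivity) hρ0.le

lemma exists_pos_mul_one_add_rpow_le_Erel_of_lt_half (hmono : StrictMonoOn p (Ici 0))
    (hp0 : p 0 = 0) (hγ : 0 ≤ γ) (ha : 0 < a) :
    ∃ C > 0, ∀ ρ r, 0 ≤ ρ → ρ < a / 2 → a ≤ r → C * (1 + ρ ^ γ) ≤ Erel p ρ r := by
  set δ := p a - p (3 / 4 * a)
  have hδ : 0 < δ := sub_pos.2 (hmono (mem_Ici.2 (by positivity)) ha.le (by linarith))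
  have hp34 : 0 ≤ p (3 / 4 * a) := hp0 ▸
    hmono.monotoneOn self_mem_Ici (mem_Ici.2 (by positivity)) (by positivity)
  have hbound : ∀ ρ r, 0 ≤ ρ → ρ < a / 2 → a ≤ r → δ / 3 ≤ Erel p ρ r := by
    intro ρ r hρ hρa hr
    have hpr : p a ≤ p r := hmono.monotoneOn ha.le (ha.le.trans hr) hr
    rcases hρ.eq_or_lt with rfl | hρ
    · rw [Erel_zero_left hp hint (ha.trans_le hr)]
      linarith
    have hfrac : 1 / 3 ≤ 1 - ρ / (3 / 4 * a) := by
      have : ρ / (3 / 4 * a) ≤ 2 / 3 := by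
        rw [div_le_iff₀ (by positivity)]
        linarith
      linarith
    calc δ / 3 = δ * (1 / 3) := by ring
      _ ≤ (p r - p (3 / 4 * a)) * (1 - ρ / (3 / 4 * a)) :=
          mul_le_mul (by linarith) hfrac (by norm_num) (by linarith)
      _ ≤ Erel p ρ r := sub_mul_one_sub_div_le_Erel hp hint
          (hmono.monotoneOn.mono Ioi_subset_Ici_self) hρ (by linarith) (by linarith)
  refine ⟨δ / 3 / (1 + (a / 2) ^ γ), by positivity, fun ρ r hρ hρa hr => ?_⟩
  calc δ / 3 / (1 + (a / 2) ^ γ) * (1 + ρ ^ γ)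
      ≤ δ / 3 / (1 + (a / 2) ^ γ) * (1 + (a / 2) ^ γ) :=
        mul_le_mul_of_nonneg_left (by gcongr) (by positivity)
    _ = δ / 3 := div_mul_cancel₀ _ (by positivity)
    _ ≤ Erel p ρ r := hbound ρ r hρ hρa hr

lemma exists_pos_mul_one_add_rpow_le_Erel_of_two_mul_le (hmono : StrictMonoOn p (Ioi 0))
    (hγ : 0 < γ) (hgrowth : ∃ c > 0, ∀ᶠ s in atTop, c * s ^ γ ≤ p s) (hb : 0 < b) :
    ∃ C > 0, ∀ ρ r, 2 * b ≤ ρ → 0 < r → r ≤ b → C * (1 + ρ ^ γ) ≤ Erel p ρ r := by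
  set f : ℝ → ℝ := fun ρ => (p (3 / 4 * ρ) - p b) / 3
  have hf : MonotoneOn f (Ici (2 * b)) := fun ρ hρ ρ' hρ' h => by
    simp only [f, mem_Ici] at *
    gcongr
    exact hmono.monotoneOn (mem_Ioi.2 (by linarith)) (mem_Ioi.2 (by linarith)) (by linarith)
  have hf₀ : 0 < f (2 * b) := by
    simp only [f]
    have := hmono hb (mem_Ioi.2 (by positivity)) (by linarith : b < 3 / 4 * (2 * b))
    linarith
  have hw : MonotoneOn (fun ρ : ℝ => 1 + ρ ^ γ) (Ici (2 * b)) := fun ρ hρ ρ' hρ' h => by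
    simp only [mem_Ici] at *
    gcongr
    linarith
  have hev : ∃ c > 0, ∀ᶠ ρ in atTop, c * (1 + ρ ^ γ) ≤ f ρ := by
    obtain ⟨c, hc, hgrowth⟩ := hgrowth
    have hk : 0 < c * (3 / 4) ^ γ := by positivity
    refine ⟨c * (3 / 4) ^ γ / 6, by positivity, ?_⟩
    filter_upwards [(tendsto_id.const_mul_atTop (by norm_num : (0:ℝ) < 3 / 4)).eventually hgrowth,
      ((tendsto_rpow_atTop hγ).const_mul_atTop hk).eventually_ge_atTop (2 * p b + c * (3 / 4) ^ γ),
      eventually_ge_atTop 0] with ρ h34 hlarge hρ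
    simp only [id, Real.mul_rpow (by norm_num : (0:ℝ) ≤ 3 / 4) hρ] at h34
    simp only [f]
    linarith
  obtain ⟨C, hC, hCf⟩ := hf.exists_pos_mul_le_of_eventually hf₀ hw (by positivity) hev
  refine ⟨C, hC, fun ρ r hρ hr hrb => (hCf ρ hρ).trans ?_⟩
  have hpr : p r ≤ p b := hmono.monotoneOn hr hb hrb
  have := sub_div_three_le_Erel hp hint hmono.monotoneOn hr (by linarith : r ≤ 3 / 4 * ρ)
  simp only [f]
  linarith

end

/-- Coercivity of the relative energy on essential and residual sets. -/
theorem stmt_0 (γ a₀ : ℝ) (p p' : ℝ → ℝ)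
    (hγ : 3 / 2 < γ) (ha₀ : 0 < a₀)
    (hp_cont : ContinuousOn p (Ici 0))
    (hp0 : p 0 = 0)
    (hp_deriv : ∀ x : ℝ, 0 < x → HasDerivAt p (p' x) x)
    (hp'_cont : ContinuousOn p' (Ioi 0))
    (hp'_pos : ∀ x : ℝ, 0 < x → 0 < p' x)
    (hp_lim : Tendsto (fun ρ : ℝ => p' ρ / ρ ^ (γ - 1)) atTop (nhds a₀))
    (hp_int : IntegrableOn (fun s : ℝ => p s / s ^ 2) (Ioo 0 1)) :
    ∀ a b : ℝ, 0 < a → a < b →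
      ∃ C : ℝ, 0 < C ∧ ∀ ρ r : ℝ, 0 ≤ ρ → r ∈ Icc a b →
        ((a / 2 ≤ ρ ∧ ρ ≤ 2 * b → C * (ρ - r) ^ 2 ≤ Erel p ρ r) ∧
         ((ρ < a / 2 ∨ 2 * b < ρ) → C * (1 + ρ ^ γ) ≤ Erel p ρ r)) := by
  intro a b ha hab
  have hb : 0 < b := ha.trans hab
  have hγ0 : 0 < γ := by linarith
  have hp : ContinuousOn p (Ioi 0) := hp_cont.mono Ioi_subset_Ici_self
  have hstrict : StrictMonoOn p (Ici 0) :=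
    strictMonoOn_of_hasDerivWithinAt_pos (convex_Ici 0) hp_cont
      (fun x hx => (hp_deriv x (by simpa using hx)).hasDerivWithinAt)
      fun x hx => hp'_pos x (by simpa using hx)
  have hpos : ∀ s ∈ Icc (a / 2) (2 * b), 0 < s := fun s hs => by linarith [hs.1]
  obtain ⟨m, hm, hlin⟩ := exists_pos_mul_sub_le_sub (fun s hs => hp_deriv s (hpos s hs))
    (hp'_cont.mono hpos) fun s hs => hp'_pos s (hpos s hs)
  obtain ⟨C₁, hC₁, hsmall⟩ :=
    exists_pos_mul_one_add_rpow_le_Erel_of_lt_half hp hp_int hstrict hp0 hγ0.le ha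
  obtain ⟨C₂, hC₂, hlarge⟩ := exists_pos_mul_one_add_rpow_le_Erel_of_two_mul_le hp hp_int
    (hstrict.mono Ioi_subset_Ici_self) hγ0
    (exists_pos_eventually_mul_rpow_le hγ0 ha₀ hp_deriv hp_lim) hb
  refine ⟨min (a / 2 * m / (2 * (2 * b) ^ 2)) (min C₁ C₂),
    lt_min (by positivity) (lt_min hC₁ hC₂),
    fun ρ r hρ hr => ⟨fun hess => ?_, fun hres => ?_⟩⟩
  · exact (mul_le_mul_of_nonneg_right (min_le_left _ _) (sq_nonneg _)).trans
      (mul_sq_le_Erel hp hp_int (by positivity) hm.le hlin hess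
        ⟨by linarith [hr.1], by linarith [hr.2]⟩)
  · have hw : 0 ≤ 1 + ρ ^ γ := by positivity
    rcases hres with hρa | hρb
    · exact (mul_le_mul_of_nonneg_right ((min_le_right _ _).trans (min_le_left _ _)) hw).trans
        (hsmall ρ r hρ hρa hr.1)
    · exact (mul_le_mul_of_nonneg_right ((min_le_right _ _).trans (min_le_right _ _)) hw).trans
        (hlarge ρ r hρb.le (ha.trans_le hr.1) hr.2)
end

section
/- Let Ω ⊂ ℝ³ be a bounded measurable set, let 0 < a < b < ∞, and let p be as in the pressure hypotheses. There exists a constant C = C(a,b) > 0 such that for all measurable functions ρ : Ω → [0,∞), u, V : Ω → ℝ³, r : Ω → [a,b], and all measurable I, J : Ω × S² × (0,∞) → ℝ, the relative entropy functional ℰ := ∫_Ω [ (1/2) ρ |u − V|² + E(ρ,r) + (1/2) ∫₀^∞ ∫_{S²} (I − J)² dσ dν ] dx satisfies ℰ ≥ C ∫_Ω [ 1_{O_res} + ρ^γ 1_{O_res} + (ρ − r)² 1_{O_ess} + ρ |u − V|² + ∫₀^∞ ∫_{S²} (I − J)² dσ dν ] dx, where O_ess = { x ∈ Ω : a/2 ≤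 ρ(x) ≤ 2b } and O_res = Ω \ O_ess (both sides of the inequality may equal +∞). -/
/-!
Write `h = H'`, so `h(ρ) = ∫₀^ρ p(s)/s² ds + p(ρ)/ρ` and `h' = p'/ρ > 0`. Then
`E(ρ, r) = H(ρ) - H(r) - h(r)(ρ - r)` is the gap between the convex function `H` and its tangent
at `r`: it vanishes at `ρ = r`, decreases before and increases after. On the essential range
`[a/2, 2b]` the continuous function `p'(ρ)/ρ` has a positive minimum `m`, which gives
`E ≥ (m/2)(ρ - r)²`. Off that range, monotonicity bounds `E(ρ, r)` below by `E(a/2, r)` or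
`E(2b, r)` (and `E(0, r) = p(r) ≥ p(a)`). For large `ρ`, `p' ≳ ρ^(γ-1)` integrates to `p ≳ ρ^γ`,
hence `h ≳ ρ^(γ-1)` and `H ≳ ρ^γ`, which beats the part of `E` linear in `ρ` since `γ > 1`.
The integrated inequality is the pointwise one with `C ≤ 1/2`.
-/

open MeasureTheory Filter Set

/-- The surface measure on the unit sphere `S² ⊂ ℝ³` (total mass `4π`). -/
noncomputable def sphereMeasure : Measure (Metric.sphere (0 : EuclideanSpace ℝ (Fin 3)) 1) :=
  (volume : Measure (EuclideanSpace ℝ (Fin 3))).toSphere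

open scoped ENNReal

theorem Convex.monotoneOn_of_hasDerivAt_nonneg {f f' : ℝ → ℝ} {s : Set ℝ} (hs : Convex ℝ s)
    (hf : ∀ t ∈ s, HasDerivAt f (f' t) t) (hf' : ∀ t ∈ interior s, 0 ≤ f' t) :
    MonotoneOn f s :=
  monotoneOn_of_hasDerivWithinAt_nonneg hs (fun t ht => (hf t ht).continuousAt.continuousWithinAt)
    (fun t ht => (hf t (interior_subset ht)).hasDerivWithinAt) hf'

theorem Convex.antitoneOn_of_hasDerivAt_nonpos {f f' : ℝ → ℝ} {s : Set ℝ} (hs : Convex ℝ s)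
    (hf : ∀ t ∈ s, HasDerivAt f (f' t) t) (hf' : ∀ t ∈ interior s, f' t ≤ 0) :
    AntitoneOn f s :=
  antitoneOn_of_hasDerivWithinAt_nonpos hs (fun t ht => (hf t ht).continuousAt.continuousWithinAt)
    (fun t ht => (hf t (interior_subset ht)).hasDerivWithinAt) hf'

theorem Convex.mul_sq_le_sub_tangent {f f' : ℝ → ℝ} {s : Set ℝ} {m r ρ : ℝ} (hs : Convex ℝ s)
    (hf : ∀ t ∈ s, HasDerivAt f (f' t) t) (hf' : MonotoneOn (fun t => f' t - m * t) s)
    (hr : r ∈ s) (hρ : ρ ∈ s) :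
    m / 2 * (ρ - r) ^ 2 ≤ f ρ - f r - f' r * (ρ - r) := by
  set φ : ℝ → ℝ := fun t => f t - f' r * t - m / 2 * (t - r) ^ 2
  have hφ : ∀ t ∈ s, HasDerivAt φ ((f' t - m * t) - (f' r - m * r)) t := fun t ht => by
    refine (((hf t ht).sub ((hasDerivAt_id t).const_mul (f' r))).sub
      ((((hasDerivAt_id t).sub_const r).pow 2).const_mul (m / 2))).congr_deriv ?_
    simp only [id, Nat.cast_ofNat]
    ring
  suffices φ r ≤ φ ρ by simp only [φ] at this; linarith
  rcases le_total r ρ with hrρ | hρr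
  · refine (hs.inter (convex_Ici r)).monotoneOn_of_hasDerivAt_nonneg (fun t ht => hφ t ht.1)
      (fun t ht => ?_) ⟨hr, self_mem_Ici⟩ ⟨hρ, hrρ⟩ hrρ
    have ht := interior_subset ht
    exact sub_nonneg.2 (hf' hr ht.1 ht.2)
  · refine (hs.inter (convex_Iic r)).antitoneOn_of_hasDerivAt_nonpos (fun t ht => hφ t ht.1)
      (fun t ht => ?_) ⟨hρ, hρr⟩ ⟨hr, self_mem_Iic⟩ hρr
    have ht := interior_subset ht
    exact sub_nonpos.2 (hf' ht.1 hr ht.2)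

theorem eventually_rpow_le_of_hasDerivAt {f f' : ℝ → ℝ} {c γ : ℝ} (hc : 0 < c) (hγ : 0 < γ)
    (hf : ∀ᶠ t in atTop, HasDerivAt f (f' t) t) (hf' : ∀ᶠ t in atTop, c * t ^ (γ - 1) ≤ f' t) :
    ∀ᶠ t in atTop, c / (2 * γ) * t ^ γ ≤ f t := by
  obtain ⟨R, hR⟩ := eventually_atTop.mp ((hf.and hf').and (eventually_gt_atTop 0))
  have hmono : MonotoneOn (fun t => f t - c / γ * t ^ γ) (Ici R) := by
    refine (convex_Ici R).monotoneOn_of_hasDerivAt_nonneg (f' := fun t => f' t - c * t ^ (γ - 1))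
      (fun t ht => ?_) (fun t ht => sub_nonneg.2 (hR t (interior_subset ht)).1.2)
    refine ((hR t ht).1.1.sub
      ((Real.hasDerivAt_rpow_const (p := γ) (Or.inl (hR t ht).2.ne')).const_mul (c / γ))).congr_deriv ?_
    field_simp
  have hlarge : ∀ᶠ t in atTop, c / γ * R ^ γ - f R ≤ c / (2 * γ) * t ^ γ :=
    ((tendsto_rpow_atTop hγ).const_mul_atTop (by positivity)).eventually_ge_atTop _
  filter_upwards [eventually_ge_atTop R, hlarge] with t ht htK
  have hRt := hmono self_mem_Ici ht ht
  have hsplit : c / γ * t ^ γ = 2 * (c / (2 * γ) * t ^ γ) := by field_simp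
  simp only at hRt
  linarith

theorem eventually_linear_le_rpow {c γ : ℝ} (hc : 0 < c) (hγ : 1 < γ) (K L : ℝ) :
    ∀ᶠ t in atTop, K * t + L ≤ c * t ^ γ := by
  have h : Tendsto (fun t => t * (c * t ^ (γ - 1) - K)) atTop atTop :=
    tendsto_id.atTop_mul_atTop₀ <| tendsto_atTop_add_const_right _ _ <|
      (tendsto_rpow_atTop (by linarith)).const_mul_atTop hc
  filter_upwards [h.eventually_ge_atTop L, eventually_gt_atTop 0] with t hL ht
  rw [Real.rpow_sub_one ht.ne'] at hL
  field_simp at hL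
  linarith

structure IsPressureLaw (p p' : ℝ → ℝ) : Prop where
  continuousOn : ContinuousOn p (Ici 0)
  map_zero : p 0 = 0
  hasDerivAt : ∀ x : ℝ, 0 < x → HasDerivAt p (p' x) x
  deriv_pos : ∀ x : ℝ, 0 < x → 0 < p' x
  integrableOn : IntegrableOn (fun s : ℝ => p s / s ^ 2) (Ioo 0 1)

/-- `H'`, the derivative of `Hpot p` on `(0, ∞)`. -/
noncomputable def enthalpy (p : ℝ → ℝ) (ρ : ℝ) : ℝ := (∫ s in (0:ℝ)..ρ, p s / s ^ 2) + p ρ / ρ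

namespace IsPressureLaw

variable {p p' : ℝ → ℝ}

theorem strictMonoOn (hp : IsPressureLaw p p') : StrictMonoOn p (Ici 0) :=
  strictMonoOn_of_hasDerivWithinAt_pos (convex_Ici 0) hp.continuousOn
    (fun x hx => (hp.hasDerivAt x (by simpa using hx)).hasDerivWithinAt)
    (fun x hx => hp.deriv_pos x (by simpa using hx))

theorem nonneg (hp : IsPressureLaw p p') {s : ℝ} (hs : 0 ≤ s) : 0 ≤ p s :=
  hp.map_zero ▸ hp.strictMonoOn.monotoneOn self_mem_Ici hs hs

theorem pos (hp : IsPressureLaw p p') {s : ℝ} (hs : 0 < s) : 0 < p s :=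
  hp.map_zero ▸ hp.strictMonoOn self_mem_Ici hs.le hs

theorem continuousOn_div_sq (hp : IsPressureLaw p p') :
    ContinuousOn (fun s : ℝ => p s / s ^ 2) (Ioi 0) :=
  (hp.continuousOn.mono Ioi_subset_Ici_self).div (continuousOn_pow 2)
    fun _ hs => pow_ne_zero _ (ne_of_gt hs)

theorem intervalIntegrable_div_sq (hp : IsPressureLaw p p') {x : ℝ} (hx : 0 < x) :
    IntervalIntegrable (fun s : ℝ => p s / s ^ 2) volume 0 x := by
  rw [intervalIntegrable_iff_integrableOn_Ioc_of_le hx.le]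
  have hfar : IntegrableOn (fun s : ℝ => p s / s ^ 2) (Icc 1 (max 1 x)) :=
    (hp.continuousOn_div_sq.mono fun _ hs => one_pos.trans_le hs.1).integrableOn_Icc
  refine (hp.integrableOn.union hfar).mono_set fun s hs => ?_
  rcases lt_or_ge s 1 with h | h
  · exact Or.inl ⟨hs.1, h⟩
  · exact Or.inr ⟨h, hs.2.trans (le_max_right 1 x)⟩

theorem integral_div_sq_nonneg (hp : IsPressureLaw p p') {x : ℝ} (hx : 0 ≤ x) :
    0 ≤ ∫ s in (0:ℝ)..x, p s / s ^ 2 :=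
  intervalIntegral.integral_nonneg hx fun _ hs => div_nonneg (hp.nonneg hs.1) (sq_nonneg _)

theorem hasDerivAt_integral_div_sq (hp : IsPressureLaw p p') {x : ℝ} (hx : 0 < x) :
    HasDerivAt (fun y : ℝ => ∫ s in (0:ℝ)..y, p s / s ^ 2) (p x / x ^ 2) x :=
  intervalIntegral.integral_hasDerivAt_right (hp.intervalIntegrable_div_sq hx)
    (hp.continuousOn_div_sq.stronglyMeasurableAtFilter isOpen_Ioi x hx)
    (hp.continuousOn_div_sq.continuousAt (Ioi_mem_nhds hx))

theorem hasDerivAt_Hpot (hp : IsPressureLaw p p') {x : ℝ} (hx : 0 < x) :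
    HasDerivAt (Hpot p) (enthalpy p x) x := by
  refine ((hasDerivAt_id x).mul (hp.hasDerivAt_integral_div_sq hx)).congr_deriv ?_
  simp only [enthalpy, id]
  field_simp

theorem hasDerivAt_enthalpy (hp : IsPressureLaw p p') {x : ℝ} (hx : 0 < x) :
    HasDerivAt (enthalpy p) (p' x / x) x := by
  refine ((hp.hasDerivAt_integral_div_sq hx).add
    ((hp.hasDerivAt x hx).div (hasDerivAt_id x) hx.ne')).congr_deriv ?_
  simp only [id]
  field_simp
  ring

theorem div_le_enthalpy (hp : IsPressureLaw p p') {x : ℝ} (hx : 0 ≤ x) :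
    p x / x ≤ enthalpy p x :=
  le_add_of_nonneg_left (hp.integral_div_sq_nonneg hx)

theorem enthalpy_nonneg (hp : IsPressureLaw p p') {x : ℝ} (hx : 0 ≤ x) : 0 ≤ enthalpy p x :=
  (div_nonneg (hp.nonneg hx) hx).trans (hp.div_le_enthalpy hx)

theorem enthalpy_monotoneOn (hp : IsPressureLaw p p') : MonotoneOn (enthalpy p) (Ioi 0) :=
  (convex_Ioi 0).monotoneOn_of_hasDerivAt_nonneg (fun _ hx => hp.hasDerivAt_enthalpy hx)
    fun x hx => by rw [interior_Ioi] at hx; exact (div_pos (hp.deriv_pos x hx) hx).le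

theorem Hpot_monotoneOn (hp : IsPressureLaw p p') : MonotoneOn (Hpot p) (Ioi 0) :=
  (convex_Ioi 0).monotoneOn_of_hasDerivAt_nonneg (fun _ hx => hp.hasDerivAt_Hpot hx)
    fun _ hx => hp.enthalpy_nonneg (interior_subset hx).le

theorem Erel_eq (hp : IsPressureLaw p p') (ρ : ℝ) {r : ℝ} (hr : 0 < r) :
    Erel p ρ r = Hpot p ρ - Hpot p r - enthalpy p r * (ρ - r) := by
  rw [Erel, (hp.hasDerivAt_Hpot hr).deriv]
  ring

theorem Erel_zero_left (hp : IsPressureLaw p p') {r : ℝ} (hr : 0 < r) : Erel p 0 r = p r := by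
  rw [hp.Erel_eq 0 hr, Hpot, Hpot, intervalIntegral.integral_same, enthalpy]
  field_simp
  ring

theorem hasDerivAt_Erel_left (hp : IsPressureLaw p p') {r x : ℝ} (hr : 0 < r) (hx : 0 < x) :
    HasDerivAt (fun ρ => Erel p ρ r) (enthalpy p x - enthalpy p r) x := by
  simp only [hp.Erel_eq _ hr]
  refine (((hp.hasDerivAt_Hpot hx).sub_const _).sub
    (((hasDerivAt_id x).sub_const r).const_mul _)).congr_deriv ?_
  simp

theorem Erel_monotoneOn (hp : IsPressureLaw p p') {r : ℝ} (hr : 0 < r) :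
    MonotoneOn (fun ρ => Erel p ρ r) (Ici r) :=
  (convex_Ici r).monotoneOn_of_hasDerivAt_nonneg
    (fun _ hx => hp.hasDerivAt_Erel_left hr (hr.trans_le hx)) fun x hx => by
      rw [interior_Ici] at hx
      exact sub_nonneg.2 (hp.enthalpy_monotoneOn hr (hr.trans hx) hx.le)

theorem Erel_antitoneOn (hp : IsPressureLaw p p') {r : ℝ} (hr : 0 < r) :
    AntitoneOn (fun ρ => Erel p ρ r) (Ioc 0 r) :=
  (convex_Ioc 0 r).antitoneOn_of_hasDerivAt_nonpos
    (fun _ hx => hp.hasDerivAt_Erel_left hr hx.1) fun x hx => by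
      rw [interior_Ioc] at hx
      exact sub_nonpos.2 (hp.enthalpy_monotoneOn hx.1 hr hx.2.le)

theorem exists_mul_sq_le_Erel (hp : IsPressureLaw p p') (hp'_cont : ContinuousOn p' (Ioi 0))
    {α β : ℝ} (hα : 0 < α) (hαβ : α ≤ β) :
    ∃ m > 0, ∀ ρ ∈ Icc α β, ∀ r ∈ Icc α β, m * (ρ - r) ^ 2 ≤ Erel p ρ r := by
  have hpos : Icc α β ⊆ Ioi 0 := fun _ ht => hα.trans_le ht.1
  obtain ⟨t₀, ht₀, hmin⟩ := isCompact_Icc.exists_isMinOn (nonempty_Icc.2 hαβ)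
    ((hp'_cont.mono hpos).div continuousOn_id fun t ht => (hpos ht).ne')
  set m := p' t₀ / t₀
  refine ⟨m / 2, div_pos (div_pos (hp.deriv_pos _ (hpos ht₀)) (hpos ht₀)) two_pos,
    fun ρ hρ r hr => ?_⟩
  have hconvex : MonotoneOn (fun t => enthalpy p t - m * t) (Icc α β) :=
    (convex_Icc α β).monotoneOn_of_hasDerivAt_nonneg
      (fun t ht => ((hp.hasDerivAt_enthalpy (hpos ht)).sub ((hasDerivAt_id t).const_mul m)))
      fun t ht => by simpa using hmin (interior_subset ht)
  rw [hp.Erel_eq ρ (hpos hr)]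
  exact (convex_Icc α β).mul_sq_le_sub_tangent (fun t ht => hp.hasDerivAt_Hpot (hpos ht))
    hconvex hr hρ

theorem eventually_rpow_le (hp : IsPressureLaw p p') {γ a₀ : ℝ} (hγ : 0 < γ) (ha₀ : 0 < a₀)
    (hp_lim : Tendsto (fun ρ : ℝ => p' ρ / ρ ^ (γ - 1)) atTop (nhds a₀)) :
    ∃ c > 0, ∀ᶠ t in atTop, c * t ^ γ ≤ p t := by
  have hp' : ∀ᶠ t in atTop, a₀ / 2 * t ^ (γ - 1) ≤ p' t := by
    filter_upwards [hp_lim.eventually (eventually_ge_nhds (half_lt_self ha₀)),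
      eventually_gt_atTop 0] with t ht ht₀
    rwa [le_div_iff₀ (Real.rpow_pos_of_pos ht₀ _)] at ht
  exact ⟨_, by positivity, eventually_rpow_le_of_hasDerivAt (half_pos ha₀) hγ
    ((eventually_gt_atTop 0).mono hp.hasDerivAt) hp'⟩

theorem eventually_rpow_le_Hpot (hp : IsPressureLaw p p') {γ a₀ : ℝ} (hγ : 0 < γ)
    (ha₀ : 0 < a₀) (hp_lim : Tendsto (fun ρ : ℝ => p' ρ / ρ ^ (γ - 1)) atTop (nhds a₀)) :
    ∃ c > 0, ∀ᶠ t in atTop, c * t ^ γ ≤ Hpot p t := by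
  obtain ⟨c, hc, hpc⟩ := hp.eventually_rpow_le hγ ha₀ hp_lim
  have henthalpy : ∀ᶠ t in atTop, c * t ^ (γ - 1) ≤ enthalpy p t := by
    filter_upwards [hpc, eventually_gt_atTop 0] with t ht ht₀
    calc c * t ^ (γ - 1) = c * t ^ γ / t := by rw [Real.rpow_sub_one ht₀.ne', mul_div_assoc]
      _ ≤ p t / t := by gcongr
      _ ≤ enthalpy p t := hp.div_le_enthalpy ht₀.le
  exact ⟨_, by positivity, eventually_rpow_le_of_hasDerivAt hc hγ
    ((eventually_gt_atTop 0).mono fun _ => hp.hasDerivAt_Hpot) henthalpy⟩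

theorem Hpot_sub_le_Erel (hp : IsPressureLaw p p') {ρ r b : ℝ} (hρ : 0 ≤ ρ) (hr : r ∈ Ioc 0 b) :
    Hpot p ρ - enthalpy p b * ρ - Hpot p b ≤ Erel p ρ r := by
  have hb : 0 < b := hr.1.trans_le hr.2
  have henthalpy := hp.enthalpy_monotoneOn hr.1 hb hr.2
  have hHpot := hp.Hpot_monotoneOn hr.1 hb hr.2
  have hρb : enthalpy p r * ρ ≤ enthalpy p b * ρ := mul_le_mul_of_nonneg_right henthalpy hρ
  have hr_pos : 0 ≤ enthalpy p r * r := mul_nonneg (hp.enthalpy_nonneg hr.1.le) hr.1.le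
  rw [hp.Erel_eq ρ hr.1]
  linarith

theorem eventually_rpow_le_Erel (hp : IsPressureLaw p p') {γ a₀ b : ℝ} (hγ : 1 < γ)
    (ha₀ : 0 < a₀) (hp_lim : Tendsto (fun ρ : ℝ => p' ρ / ρ ^ (γ - 1)) atTop (nhds a₀)) :
    ∃ c > 0, ∀ᶠ ρ in atTop, ∀ r ∈ Ioc 0 b, c * ρ ^ γ ≤ Erel p ρ r := by
  obtain ⟨c, hc, hHpot⟩ := hp.eventually_rpow_le_Hpot (by linarith) ha₀ hp_lim
  refine ⟨c / 2, half_pos hc, ?_⟩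
  filter_upwards [hHpot, eventually_linear_le_rpow (half_pos hc) hγ (enthalpy p b) (Hpot p b),
    eventually_ge_atTop 0] with ρ hρ hlin hρ₀ r hr
  linarith [hp.Hpot_sub_le_Erel hρ₀ hr]

theorem exists_le_Erel_of_notMem_Icc (hp : IsPressureLaw p p')
    (hp'_cont : ContinuousOn p' (Ioi 0)) {a b : ℝ} (ha : 0 < a) (hab : a ≤ b) :
    ∃ δ > 0, ∀ r ∈ Icc a b, ∀ ρ, 0 ≤ ρ → ρ ∉ Icc (a / 2) (2 * b) → δ ≤ Erel p ρ r := by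
  obtain ⟨m, hm, hmE⟩ := hp.exists_mul_sq_le_Erel hp'_cont (β := 2 * b) (half_pos ha) (by linarith)
  refine ⟨min (p a) (m * (a / 2) ^ 2), lt_min (hp.pos ha) (by positivity), ?_⟩
  intro r hr ρ hρ hρI
  have hr₀ : 0 < r := ha.trans_le hr.1
  rw [mem_Icc, not_and_or, not_le, not_le] at hρI
  rcases hρI with hsmall | hlarge
  · rcases hρ.eq_or_lt with rfl | hρ₀
    · rw [hp.Erel_zero_left hr₀]
      exact (min_le_left _ _).trans (hp.strictMonoOn.monotoneOn ha.le (ha.le.trans hr.1) hr.1)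
    calc min (p a) (m * (a / 2) ^ 2) ≤ m * (a / 2 - r) ^ 2 :=
          (min_le_right _ _).trans (mul_le_mul_of_nonneg_left (by nlinarith [hr.1]) hm.le)
      _ ≤ Erel p (a / 2) r := hmE _ ⟨le_rfl, by linarith⟩ _ ⟨by linarith [hr.1], by linarith [hr.2]⟩
      _ ≤ Erel p ρ r := hp.Erel_antitoneOn hr₀ ⟨hρ₀, by linarith [hr.1]⟩
          ⟨half_pos ha, by linarith [hr.1]⟩ hsmall.le
  · calc min (p a) (m * (a / 2) ^ 2) ≤ m * (2 * b - r) ^ 2 :=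
          (min_le_right _ _).trans (mul_le_mul_of_nonneg_left (by nlinarith [hr.1, hr.2]) hm.le)
      _ ≤ Erel p (2 * b) r := hmE _ ⟨by linarith, le_rfl⟩ _ ⟨by linarith [hr.1], by linarith [hr.2]⟩
      _ ≤ Erel p ρ r := hp.Erel_monotoneOn hr₀ (by linarith [hr.2] : r ≤ 2 * b)
          (by linarith [hr.2] : r ≤ ρ) hlarge.le

theorem exists_mul_one_add_rpow_le_Erel (hp : IsPressureLaw p p')
    (hp'_cont : ContinuousOn p' (Ioi 0)) {γ a₀ a b : ℝ} (hγ : 1 < γ) (ha₀ : 0 < a₀)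
    (hp_lim : Tendsto (fun ρ : ℝ => p' ρ / ρ ^ (γ - 1)) atTop (nhds a₀))
    (ha : 0 < a) (hab : a ≤ b) :
    ∃ c > 0, ∀ r ∈ Icc a b, ∀ ρ, 0 ≤ ρ → ρ ∉ Icc (a / 2) (2 * b) →
      c * (1 + ρ ^ γ) ≤ Erel p ρ r := by
  obtain ⟨δ, hδ, hδE⟩ := hp.exists_le_Erel_of_notMem_Icc hp'_cont ha hab
  obtain ⟨c, hc, hcE⟩ := hp.eventually_rpow_le_Erel (b := b) hγ ha₀ hp_lim
  obtain ⟨M, hM⟩ := eventually_atTop.mp (hcE.and (eventually_ge_atTop 1))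
  have hM₁ : 0 < 1 + M ^ γ := by linarith [Real.rpow_nonneg (zero_le_one.trans (hM M le_rfl).2) γ]
  refine ⟨min (δ / (1 + M ^ γ)) (c / 2), lt_min (div_pos hδ hM₁) (half_pos hc), ?_⟩
  intro r hr ρ hρ hρI
  rcases le_total ρ M with hρM | hMρ
  · calc min (δ / (1 + M ^ γ)) (c / 2) * (1 + ρ ^ γ) ≤ δ / (1 + M ^ γ) * (1 + M ^ γ) := by
          gcongr
          exact min_le_left _ _
      _ = δ := div_mul_cancel₀ δ hM₁.ne'
      _ ≤ Erel p ρ r := hδE r hr ρ hρ hρI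
  · have hρ₁ : 1 ≤ ρ ^ γ := Real.one_le_rpow (hM ρ hMρ).2 (by linarith)
    calc min (δ / (1 + M ^ γ)) (c / 2) * (1 + ρ ^ γ) ≤ c / 2 * (2 * ρ ^ γ) := by
          gcongr
          · exact min_le_right _ _
          · linarith
      _ = c * ρ ^ γ := by ring
      _ ≤ Erel p ρ r := (hM ρ hMρ).1 r ⟨ha.trans_le hr.1, hr.2⟩

theorem exists_Erel_lower_bound (hp : IsPressureLaw p p')
    (hp'_cont : ContinuousOn p' (Ioi 0)) {γ a₀ a b : ℝ} (hγ : 1 < γ) (ha₀ : 0 < a₀)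
    (hp_lim : Tendsto (fun ρ : ℝ => p' ρ / ρ ^ (γ - 1)) atTop (nhds a₀))
    (ha : 0 < a) (hab : a ≤ b) :
    ∃ C > 0, C ≤ 1 / 2 ∧ ∀ r ∈ Icc a b, ∀ ρ, 0 ≤ ρ →
      (ρ ∈ Icc (a / 2) (2 * b) → C * (ρ - r) ^ 2 ≤ Erel p ρ r) ∧
      (ρ ∉ Icc (a / 2) (2 * b) → C * (1 + ρ ^ γ) ≤ Erel p ρ r) := by
  obtain ⟨m, hm, hmE⟩ := hp.exists_mul_sq_le_Erel hp'_cont (β := 2 * b) (half_pos ha)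
    (by linarith)
  obtain ⟨c, hc, hcE⟩ := hp.exists_mul_one_add_rpow_le_Erel hp'_cont hγ ha₀ hp_lim ha hab
  refine ⟨min (1 / 2) (min m c), by positivity, min_le_left _ _, fun r hr ρ hρ => ⟨?_, ?_⟩⟩
  · intro hρI
    have hrI : r ∈ Icc (a / 2) (2 * b) := ⟨by linarith [hr.1], by linarith [hr.2]⟩
    calc min (1 / 2) (min m c) * (ρ - r) ^ 2 ≤ m * (ρ - r) ^ 2 := by
          gcongr; exact (min_le_right _ _).trans (min_le_left _ _)
      _ ≤ Erel p ρ r := hmE ρ hρI r hrI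
  · intro hρI
    calc min (1 / 2) (min m c) * (1 + ρ ^ γ) ≤ c * (1 + ρ ^ γ) := by
          have : 0 ≤ ρ ^ γ := Real.rpow_nonneg hρ γ
          gcongr; exact (min_le_right _ _).trans (min_le_right _ _)
      _ ≤ Erel p ρ r := hcE r hr ρ hρ hρI

end IsPressureLaw

theorem ENNReal.ofReal_mul_add_add_le {C k E : ℝ} {B Q : ℝ≥0∞} (hC : 0 ≤ C) (hC_half : C ≤ 1 / 2)
    (hk : 0 ≤ k) (hB : ENNReal.ofReal C * B ≤ ENNReal.ofReal E) :
    ENNReal.ofReal C * (B + ENNReal.ofReal k + Q)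
      ≤ ENNReal.ofReal (1 / 2 * k) + ENNReal.ofReal E + 1 / 2 * Q := by
  have hC' : ENNReal.ofReal C ≤ 1 / 2 := by
    simpa [ENNReal.ofReal_div_of_pos] using ENNReal.ofReal_le_ofReal hC_half
  calc ENNReal.ofReal C * (B + ENNReal.ofReal k + Q)
      = ENNReal.ofReal (C * k) + ENNReal.ofReal C * B + ENNReal.ofReal C * Q := by
        rw [ENNReal.ofReal_mul hC]; ring
    _ ≤ ENNReal.ofReal (1 / 2 * k) + ENNReal.ofReal E + 1 / 2 * Q := by
        gcongr

theorem stmt_1_general (γ a₀ : ℝ) (p p' : ℝ → ℝ)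
    (hγ : 3 / 2 < γ) (ha₀ : 0 < a₀)
    (hp_cont : ContinuousOn p (Ici 0))
    (hp0 : p 0 = 0)
    (hp_deriv : ∀ x : ℝ, 0 < x → HasDerivAt p (p' x) x)
    (hp'_cont : ContinuousOn p' (Ioi 0))
    (hp'_pos : ∀ x : ℝ, 0 < x → 0 < p' x)
    (hp_lim : Tendsto (fun ρ : ℝ => p' ρ / ρ ^ (γ - 1)) atTop (nhds a₀))
    (hp_int : IntegrableOn (fun s : ℝ => p s / s ^ 2) (Ioo 0 1))
    (Ω : Set (EuclideanSpace ℝ (Fin 3)))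
    (a b : ℝ) (ha : 0 < a) (hab : a < b) :
    ∃ C : ℝ, 0 < C ∧
      ∀ (ρ : EuclideanSpace ℝ (Fin 3) → ℝ)
        (u V : EuclideanSpace ℝ (Fin 3) → EuclideanSpace ℝ (Fin 3))
        (r : EuclideanSpace ℝ (Fin 3) → ℝ)
        (I J : EuclideanSpace ℝ (Fin 3) →
          Metric.sphere (0 : EuclideanSpace ℝ (Fin 3)) 1 → ℝ → ℝ),
        Measurable ρ → Measurable u → Measurable V → Measurable r →
        (∀ x, 0 ≤ ρ x) → (∀ x, r x ∈ Icc a b) →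
        Measurable (fun q : EuclideanSpace ℝ (Fin 3) ×
          Metric.sphere (0 : EuclideanSpace ℝ (Fin 3)) 1 × ℝ => I q.1 q.2.1 q.2.2) →
        Measurable (fun q : EuclideanSpace ℝ (Fin 3) ×
          Metric.sphere (0 : EuclideanSpace ℝ (Fin 3)) 1 × ℝ => J q.1 q.2.1 q.2.2) →
        ENNReal.ofReal C *
          ∫⁻ x in Ω,
            ((if a / 2 ≤ ρ x ∧ ρ x ≤ 2 * b then ENNReal.ofReal ((ρ x - r x) ^ 2)
              else 1 + ENNReal.ofReal (ρ x ^ γ))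
             + ENNReal.ofReal (ρ x * ‖u x - V x‖ ^ 2)
             + ∫⁻ ν in Ioi (0:ℝ), ∫⁻ ς, ENNReal.ofReal ((I x ς ν - J x ς ν) ^ 2)
                 ∂sphereMeasure)
        ≤ ∫⁻ x in Ω,
            (ENNReal.ofReal (1 / 2 * ρ x * ‖u x - V x‖ ^ 2)
             + ENNReal.ofReal (Erel p (ρ x) (r x))
             + (1 / 2) * ∫⁻ ν in Ioi (0:ℝ), ∫⁻ ς, ENNReal.ofReal ((I x ς ν - J x ς ν) ^ 2)
                 ∂sphereMeasure) := by
  have hp : IsPressureLaw p p' := ⟨hp_cont, hp0, hp_deriv, hp'_pos, hp_int⟩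
  obtain ⟨C, hC, hC_half, hCE⟩ :=
    hp.exists_Erel_lower_bound hp'_cont (by linarith) ha₀ hp_lim ha hab.le
  refine ⟨C, hC, fun ρ u V r I J _ _ _ _ hρ hr _ _ => ?_⟩
  rw [← lintegral_const_mul' _ _ ENNReal.ofReal_ne_top]
  refine lintegral_mono fun x => ?_
  rw [mul_assoc (1 / 2)]
  refine ENNReal.ofReal_mul_add_add_le hC.le hC_half (mul_nonneg (hρ x) (sq_nonneg _)) ?_
  obtain ⟨hess, hres⟩ := hCE (r x) (hr x) (ρ x) (hρ x)
  rw [← ENNReal.ofReal_one, ← ENNReal.ofReal_add zero_le_one (Real.rpow_nonneg (hρ x) γ)]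
  split_ifs with hx
  · rw [← ENNReal.ofReal_mul hC.le]
    exact ENNReal.ofReal_le_ofReal (hess hx)
  · rw [← ENNReal.ofReal_mul hC.le]
    exact ENNReal.ofReal_le_ofReal (hres hx)

/-- Integrated lower bound for the relative entropy functional: the relative entropy
dominates (up to a constant `C = C(a,b) > 0`) the residual/essential decomposition,
the relative kinetic energy and the radiative distance.  Both sides may be `+∞`. -/
theorem stmt_1 (γ a₀ : ℝ) (p p' : ℝ → ℝ)
    (hγ : 3 / 2 < γ) (ha₀ : 0 < a₀)
    (hp_cont : ContinuousOn p (Ici 0))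
    (hp0 : p 0 = 0)
    (hp_deriv : ∀ x : ℝ, 0 < x → HasDerivAt p (p' x) x)
    (hp'_cont : ContinuousOn p' (Ioi 0))
    (hp'_pos : ∀ x : ℝ, 0 < x → 0 < p' x)
    (hp_lim : Tendsto (fun ρ : ℝ => p' ρ / ρ ^ (γ - 1)) atTop (nhds a₀))
    (hp_int : IntegrableOn (fun s : ℝ => p s / s ^ 2) (Ioo 0 1))
    (Ω : Set (EuclideanSpace ℝ (Fin 3)))
    (hΩb : Bornology.IsBounded Ω) (hΩm : MeasurableSet Ω)
    (a b : ℝ) (ha : 0 < a) (hab : a < b) :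
    ∃ C : ℝ, 0 < C ∧
      ∀ (ρ : EuclideanSpace ℝ (Fin 3) → ℝ)
        (u V : EuclideanSpace ℝ (Fin 3) → EuclideanSpace ℝ (Fin 3))
        (r : EuclideanSpace ℝ (Fin 3) → ℝ)
        (I J : EuclideanSpace ℝ (Fin 3) →
          Metric.sphere (0 : EuclideanSpace ℝ (Fin 3)) 1 → ℝ → ℝ),
        Measurable ρ → Measurable u → Measurable V → Measurable r →
        (∀ x, 0 ≤ ρ x) → (∀ x, r x ∈ Icc a b) →
        Measurable (fun q : EuclideanSpace ℝ (Fin 3) ×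
          Metric.sphere (0 : EuclideanSpace ℝ (Fin 3)) 1 × ℝ => I q.1 q.2.1 q.2.2) →
        Measurable (fun q : EuclideanSpace ℝ (Fin 3) ×
          Metric.sphere (0 : EuclideanSpace ℝ (Fin 3)) 1 × ℝ => J q.1 q.2.1 q.2.2) →
        ENNReal.ofReal C *
          ∫⁻ x in Ω,
            ((if a / 2 ≤ ρ x ∧ ρ x ≤ 2 * b then ENNReal.ofReal ((ρ x - r x) ^ 2)
              else 1 + ENNReal.ofReal (ρ x ^ γ))
             + ENNReal.ofReal (ρ x * ‖u x - V x‖ ^ 2)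
             + ∫⁻ ν in Ioi (0:ℝ), ∫⁻ ς, ENNReal.ofReal ((I x ς ν - J x ς ν) ^ 2)
                 ∂sphereMeasure)
        ≤ ∫⁻ x in Ω,
            (ENNReal.ofReal (1 / 2 * ρ x * ‖u x - V x‖ ^ 2)
             + ENNReal.ofReal (Erel p (ρ x) (r x))
             + (1 / 2) * ∫⁻ ν in Ioi (0:ℝ), ∫⁻ ς, ENNReal.ofReal ((I x ς ν - J x ς ν) ^ 2)
                 ∂sphereMeasure) :=
  stmt_1_general γ a₀ p p' hγ ha₀ hp_cont hp0 hp_deriv hp'_cont hp'_pos hp_lim hp_int Ω a b ha hab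
end

section
/- Let ω ⊂ ℝ² be a bounded measurable set, let r : ω → ℝ be bounded and measurable, let ε > 0 and x_h ∈ ℝ². Then for a.e. x₃ ∈ (0,1) the integral F(x₃) := ∫_{ω×(0,1)} ε r(y_h)(x₃ − y₃)/(|x_h − y_h|² + ε²(x₃ − y₃)²)^{3/2} dy converges absolutely, and ∫₀^1 F(x₃) dx₃ = 0; that is, the x₃-average over (0,1) of the vertical component of the rescaled self-gravitation kernel vanishes identically for every ε > 0. -/
/-!
Write `p = (x_h, x₃)` and `D = |x_h - y_h|² + ε²(x₃ - y₃)²`. Since `ε|x₃ - y₃| ≤ √D` and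
`D ≳ |y - p|²`, the integrand is bounded by `C |y - p|⁻²`, which is locally integrable in three
dimensions; hence `F(x₃)` converges absolutely for every `x₃`. The reflection
`(x₃, y₃) ↦ (1 - x₃, 1 - y₃)` maps `(0,1)` onto itself, preserves Lebesgue measure and flips the
sign of `x₃ - y₃`, so `F(1 - x₃) = -F(x₃)` and the average of `F` over `(0,1)` vanishes.
-/

open MeasureTheory Set

theorem abs_div_rpow_three_halves_le_inv {a b : ℝ} (ha : 0 ≤ a) :
    |b| / (a + b ^ 2) ^ (3 / 2 : ℝ) ≤ (a + b ^ 2)⁻¹ := by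
  rcases (add_nonneg ha (sq_nonneg b)).eq_or_lt with hD | hD
  · rw [← hD]; simp
  have hb : |b| ≤ (a + b ^ 2) ^ (1 / 2 : ℝ) := by
    rw [← Real.sqrt_eq_rpow, ← Real.sqrt_sq_eq_abs]
    exact Real.sqrt_le_sqrt (by linarith)
  calc |b| / (a + b ^ 2) ^ (3 / 2 : ℝ)
      ≤ (a + b ^ 2) ^ (1 / 2 : ℝ) / (a + b ^ 2) ^ (3 / 2 : ℝ) := by gcongr
    _ = (a + b ^ 2)⁻¹ := by
      rw [← Real.rpow_sub hD, ← Real.rpow_neg_one]; norm_num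

theorem min_one_sq_mul_norm_sq_le {E : Type*} [SeminormedAddCommGroup E] (ε : ℝ) (z : E × ℝ) :
    min 1 (ε ^ 2) * ‖z‖ ^ 2 ≤ ‖z.1‖ ^ 2 + ε ^ 2 * z.2 ^ 2 := by
  have hz : ‖z‖ ^ 2 ≤ ‖z.1‖ ^ 2 + z.2 ^ 2 := by
    rw [Prod.norm_def, Real.norm_eq_abs, ← sq_abs z.2]
    rcases max_cases ‖z.1‖ |z.2| with ⟨h, _⟩ | ⟨h, _⟩ <;> rw [h] <;>
      nlinarith [sq_nonneg z.2, sq_nonneg ‖z.1‖]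
  nlinarith [min_le_left 1 (ε ^ 2), min_le_right 1 (ε ^ 2), sq_nonneg ‖z.1‖, sq_nonneg z.2,
    le_min zero_le_one (sq_nonneg ε), sq_nonneg ‖z‖]

theorem abs_mul_div_rpow_three_halves_le {E : Type*} [NormedAddCommGroup E] {ε : ℝ}
    (hε : ε ≠ 0) (z : E × ℝ) :
    |ε * z.2| / (‖z.1‖ ^ 2 + ε ^ 2 * z.2 ^ 2) ^ (3 / 2 : ℝ) ≤
      (min 1 (ε ^ 2))⁻¹ * ‖z‖ ^ (-2 : ℝ) := by
  have hc : 0 < min 1 (ε ^ 2) := lt_min one_pos (by positivity)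
  have h := abs_div_rpow_three_halves_le_inv (sq_nonneg ‖z.1‖) (b := ε * z.2)
  rw [mul_pow] at h
  refine h.trans ?_
  rw [Real.rpow_neg (norm_nonneg z), Real.rpow_two, ← mul_inv]
  rcases eq_or_ne z 0 with rfl | hz
  · simp
  exact inv_anti₀ (by positivity) (min_one_sq_mul_norm_sq_le ε z)

section LocalIntegrability

variable {E : Type*} [NormedAddCommGroup E] [NormedSpace ℝ E] [FiniteDimensional ℝ E]
  [MeasurableSpace E] [BorelSpace E] (μ : Measure E) [μ.IsAddHaarMeasure]

theorem locallyIntegrable_norm_sub_rpow_neg (hd : 1 ≤ Module.finrank ℝ E) {α : ℝ}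
    (hα : α < Module.finrank ℝ E) (p : E) :
    LocallyIntegrable (fun y => ‖y - p‖ ^ (-α)) μ := by
  have h₀ : LocallyIntegrable (fun w : E => ‖w‖ ^ (-α)) μ :=
    locallyIntegrable_of_norm_le_rpow hd hα (C := 1)
      (ae_of_all _ fun w => by simp [abs_of_nonneg (Real.rpow_nonneg (norm_nonneg w) _)])
      (measurable_norm.pow_const _).aestronglyMeasurable
  rw [← map_sub_right_eq_self μ p] at h₀
  exact (locallyIntegrable_map_homeomorph (Homeomorph.subRight p)).1 h₀

theorem integrableOn_of_isBounded_of_norm_le_rpow {F : Type*} [NormedAddCommGroup F]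
    {f : E → F} (hf : AEStronglyMeasurable f μ) (hd : 1 ≤ Module.finrank ℝ E) {C α : ℝ}
    (hα : α < Module.finrank ℝ E) (p : E) (hfp : ∀ y, ‖f y‖ ≤ C * ‖y - p‖ ^ (-α))
    {s : Set E} (hs : Bornology.IsBounded s) :
    IntegrableOn f s μ := by
  have hg := ((locallyIntegrable_norm_sub_rpow_neg μ hd hα p).integrableOn_isCompact
    hs.isCompact_closure).mono_set subset_closure
  exact (hg.const_mul C).mono' hf.restrict (ae_of_all _ hfp)

theorem integrableOn_mul_sub_div_rpow_three_halves (hE : 2 ≤ Module.finrank ℝ E)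
    {s : Set (E × ℝ)} (hs : Bornology.IsBounded s) {r : E → ℝ} (hrm : Measurable r) {M : ℝ}
    (hrb : ∀ y, |r y| ≤ M) {ε : ℝ} (hε : ε ≠ 0) (x_h : E) (x₃ : ℝ) :
    IntegrableOn (fun y : E × ℝ =>
      ε * r y.1 * (x₃ - y.2) / (‖x_h - y.1‖ ^ 2 + ε ^ 2 * (x₃ - y.2) ^ 2) ^ (3 / 2 : ℝ))
      s (μ.prod volume) := by
  have hdim : Module.finrank ℝ (E × ℝ) = Module.finrank ℝ E + 1 := by
    simp [Module.finrank_prod]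
  refine integrableOn_of_isBounded_of_norm_le_rpow _ (Measurable.aestronglyMeasurable
    (by fun_prop)) (by omega) (C := M * (min 1 (ε ^ 2))⁻¹) (α := 2)
    (by rw [hdim]; push_cast; exact_mod_cast Nat.lt_succ_of_le hE) (x_h, x₃) (fun y => ?_) hs
  have hk := abs_mul_div_rpow_three_halves_le hε ((x_h, x₃) - y)
  rw [norm_sub_rev] at hk
  have hD : 0 ≤ (‖x_h - y.1‖ ^ 2 + ε ^ 2 * (x₃ - y.2) ^ 2) ^ (3 / 2 : ℝ) := by positivity
  calc ‖ε * r y.1 * (x₃ - y.2) / (‖x_h - y.1‖ ^ 2 + ε ^ 2 * (x₃ - y.2) ^ 2) ^ (3 / 2 : ℝ)‖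
      = |r y.1| * (|ε * (x₃ - y.2)| /
          (‖x_h - y.1‖ ^ 2 + ε ^ 2 * (x₃ - y.2) ^ 2) ^ (3 / 2 : ℝ)) := by
        rw [Real.norm_eq_abs, mul_comm ε, mul_assoc, mul_div_assoc, abs_mul, abs_div,
          abs_of_nonneg hD]
    _ ≤ M * ((min 1 (ε ^ 2))⁻¹ * ‖y - (x_h, x₃)‖ ^ (-2 : ℝ)) :=
        mul_le_mul (hrb _) hk (by positivity) ((abs_nonneg _).trans (hrb 0))
    _ = _ := (mul_assoc _ _ _).symm

end LocalIntegrability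

section Reflection

variable {G : Type*} [NormedAddCommGroup G] [NormedSpace ℝ G]

theorem MeasureTheory.MeasurePreserving.setIntegral_comp_of_image_eq {X : Type*}
    [MeasurableSpace X] {μ : Measure X} {e : X → X} (he : MeasurePreserving e μ μ)
    (he' : MeasurableEmbedding e) {S : Set X} (hS : e '' S = S) (g : X → G) :
    ∫ x in S, g (e x) ∂μ = ∫ x in S, g x ∂μ := by
  conv_rhs => rw [← hS]
  exact (he.setIntegral_image_emb he' g S).symm

theorem image_add_sub_Ioo (a b : ℝ) : (fun x => a + b - x) '' Ioo a b = Ioo a b := by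
  rw [image_const_sub_Ioo]; simp

theorem setIntegral_Ioo_eq_zero_of_reflect {a b : ℝ} {F : ℝ → G}
    (hF : ∀ x, F (a + b - x) = -F x) : ∫ x in Ioo a b, F x = 0 := by
  have h := (Measure.measurePreserving_sub_left volume (a + b)).setIntegral_comp_of_image_eq
    (Homeomorph.subLeft (a + b)).measurableEmbedding (image_add_sub_Ioo a b) F
  simp only [hF, integral_neg] at h
  have h2 : (2 : ℝ) • ∫ x in Ioo a b, F x = 0 := by
    rw [two_smul]; nth_rewrite 1 [← h]; exact neg_add_cancel _
  exact (smul_eq_zero.1 h2).resolve_left two_ne_zero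

theorem setIntegral_prod_Ioo_reflect {X : Type*} [MeasurableSpace X] (μ : Measure X) [SFinite μ]
    (s : Set X) (a b : ℝ) (g : X × ℝ → G) :
    ∫ y in s ×ˢ Ioo a b, g (y.1, a + b - y.2) ∂μ.prod volume =
      ∫ y in s ×ˢ Ioo a b, g y ∂μ.prod volume := by
  refine ((MeasurePreserving.id μ).prod (Measure.measurePreserving_sub_left volume (a + b)))
    |>.setIntegral_comp_of_image_eq
    (MeasurableEmbedding.id.prodMap (Homeomorph.subLeft (a + b)).measurableEmbedding) ?_ g
  rw [prodMap_image_prod, image_id, image_add_sub_Ioo]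

end Reflection

theorem stmt_10_general (ω : Set (EuclideanSpace ℝ (Fin 2)))
    (hωb : Bornology.IsBounded ω)
    (r : EuclideanSpace ℝ (Fin 2) → ℝ) (hrm : Measurable r)
    (M : ℝ) (hrb : ∀ y, |r y| ≤ M)
    (ε : ℝ) (hε : 0 < ε) (x_h : EuclideanSpace ℝ (Fin 2)) :
    (∀ᵐ x₃ ∂(volume.restrict (Ioo (0:ℝ) 1)),
      IntegrableOn
        (fun y : EuclideanSpace ℝ (Fin 2) × ℝ =>
          ε * r y.1 * (x₃ - y.2) / (‖x_h - y.1‖ ^ 2 + ε ^ 2 * (x₃ - y.2) ^ 2) ^ (3 / 2 : ℝ))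
        (ω ×ˢ Ioo (0:ℝ) 1)) ∧
    ∫ x₃ in Ioo (0:ℝ) 1, ∫ y in ω ×ˢ Ioo (0:ℝ) 1,
        ε * r y.1 * (x₃ - y.2) / (‖x_h - y.1‖ ^ 2 + ε ^ 2 * (x₃ - y.2) ^ 2) ^ (3 / 2 : ℝ)
      = 0 := by
  refine ⟨ae_of_all _ fun x₃ => integrableOn_mul_sub_div_rpow_three_halves volume (by simp)
    (hωb.prod (Metric.isBounded_Ioo 0 1)) hrm hrb hε.ne' x_h x₃, ?_⟩
  refine setIntegral_Ioo_eq_zero_of_reflect fun x₃ => ?_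
  rw [Measure.volume_eq_prod, ← integral_neg,
    ← setIntegral_prod_Ioo_reflect volume ω 0 1 (fun y => -(ε * r y.1 * (x₃ - y.2) /
      (‖x_h - y.1‖ ^ 2 + ε ^ 2 * (x₃ - y.2) ^ 2) ^ (3 / 2 : ℝ)))]
  refine integral_congr_ae (ae_of_all _ fun y => ?_)
  have hflip : 0 + 1 - x₃ - y.2 = -(x₃ - (0 + 1 - y.2)) := by ring
  simp only [hflip, neg_sq, mul_neg, neg_div]

/-- The `x₃`-average over `(0,1)` of the vertical component of the rescaled
self-gravitation kernel vanishes: for a.e. `x₃ ∈ (0,1)` the integral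
`F(x₃) = ∫_{ω×(0,1)} ε r(y_h)(x₃ − y₃)/(|x_h − y_h|² + ε²(x₃ − y₃)²)^{3/2} dy`
converges absolutely, and `∫₀¹ F(x₃) dx₃ = 0`. -/
theorem stmt_10 (ω : Set (EuclideanSpace ℝ (Fin 2)))
    (hωb : Bornology.IsBounded ω) (hωm : MeasurableSet ω)
    (r : EuclideanSpace ℝ (Fin 2) → ℝ) (hrm : Measurable r)
    (M : ℝ) (hrb : ∀ y, |r y| ≤ M)
    (ε : ℝ) (hε : 0 < ε) (x_h : EuclideanSpace ℝ (Fin 2)) :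
    (∀ᵐ x₃ ∂(volume.restrict (Ioo (0:ℝ) 1)),
      IntegrableOn
        (fun y : EuclideanSpace ℝ (Fin 2) × ℝ =>
          ε * r y.1 * (x₃ - y.2) / (‖x_h - y.1‖ ^ 2 + ε ^ 2 * (x₃ - y.2) ^ 2) ^ (3 / 2 : ℝ))
        (ω ×ˢ Ioo (0:ℝ) 1)) ∧
    ∫ x₃ in Ioo (0:ℝ) 1, ∫ y in ω ×ˢ Ioo (0:ℝ) 1,
        ε * r y.1 * (x₃ - y.2) / (‖x_h - y.1‖ ^ 2 + ε ^ 2 * (x₃ - y.2) ^ 2) ^ (3 / 2 : ℝ)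
      = 0 :=
  stmt_10_general ω hωb r hrm M hrb ε hε x_h
end

section
/- Let p : [0,∞) → ℝ be continuous on [0,∞), continuously differentiable on (0,∞), with p(0) = 0, p'(ρ) > 0 for all ρ > 0, lim_{ρ→∞} p'(ρ)/ρ^{γ−1} = a₀ for some constants a₀ > 0 and γ > 3/2, and with s ↦ p(s)/s² integrable on (0,1), and let H(ρ) = ρ ∫₀^ρ p(s)/s² ds. Then there exist constants c₁ > 0 and c₂ > 0 such that H(ρ) ≥ c₁ ρ^γ − c₂ for all ρ ≥ 0. -/
open MeasureTheory Filter Set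

/-!
Since `p' ρ ≥ (a₀/2) ρ^(γ-1)` for large `ρ`, comparing derivatives gives
`p s ≥ c (s^γ - M^γ)` for all `s ≥ 0`. On the other hand `p` is nondecreasing and nonnegative, so
`H ρ ≥ ρ ∫_{ρ/2}^ρ p(s)/s² ds ≥ p(ρ/2)/2`, and the growth of `p` transfers to `H`.
-/

lemma monotoneOn_sub_const_mul_rpow {f f' : ℝ → ℝ} {M c γ : ℝ} (hM : 0 < M)
    (hf : ∀ x, M ≤ x → HasDerivAt f (f' x) x)
    (hf' : ∀ x, M ≤ x → c * (γ * x ^ (γ - 1)) ≤ f' x) :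
    MonotoneOn (fun x => f x - c * x ^ γ) (Ici M) := by
  have hderiv : ∀ x, M ≤ x →
      HasDerivAt (fun x => f x - c * x ^ γ) (f' x - c * (γ * x ^ (γ - 1))) x := fun x hx =>
    (hf x hx).sub ((Real.hasDerivAt_rpow_const (Or.inl (hM.trans_le hx).ne')).const_mul c)
  exact monotoneOn_of_hasDerivWithinAt_nonneg (convex_Ici M)
    (fun x hx => (hderiv x hx).continuousAt.continuousWithinAt)
    (fun x hx => (hderiv x (interior_subset hx)).hasDerivWithinAt)
    (fun x hx => sub_nonneg.2 (hf' x (interior_subset hx)))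

lemma exists_mul_rpow_sub_rpow_le {p p' : ℝ → ℝ} {γ a₀ : ℝ} (hγ : 0 < γ) (ha₀ : 0 < a₀)
    (hp_nonneg : ∀ s, 0 ≤ s → 0 ≤ p s)
    (hp_deriv : ∀ x : ℝ, 0 < x → HasDerivAt p (p' x) x)
    (hp_lim : Tendsto (fun ρ : ℝ => p' ρ / ρ ^ (γ - 1)) atTop (nhds a₀)) :
    ∃ c > 0, ∃ M > 0, ∀ s, 0 ≤ s → c * (s ^ γ - M ^ γ) ≤ p s := by
  obtain ⟨M, hM_pos, hM⟩ : ∃ M > 0, ∀ x, M ≤ x → a₀ / 2 < p' x / x ^ (γ - 1) := by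
    obtain ⟨M₀, hM₀⟩ := eventually_atTop.1 (hp_lim.eventually (lt_mem_nhds (half_lt_self ha₀)))
    exact ⟨max M₀ 1, by positivity, fun x hx => hM₀ x (le_of_max_le_left hx)⟩
  set c := a₀ / (2 * γ)
  have hmono : MonotoneOn (fun x => p x - c * x ^ γ) (Ici M) := by
    refine monotoneOn_sub_const_mul_rpow hM_pos (fun x hx => hp_deriv x (hM_pos.trans_le hx))
      fun x hx => ?_
    have hx_pow : 0 < x ^ (γ - 1) := Real.rpow_pos_of_pos (hM_pos.trans_le hx) _
    have hcγ : c * γ = a₀ / 2 := by simp only [c]; field_simp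
    rw [← mul_assoc, hcγ]
    exact ((lt_div_iff₀ hx_pow).1 (hM x hx)).le
  have hc : 0 < c := by positivity
  refine ⟨c, hc, M, hM_pos, fun s hs => ?_⟩
  rcases le_total M s with hMs | hsM
  · have h : p M - c * M ^ γ ≤ p s - c * s ^ γ := hmono (mem_Ici.2 le_rfl) hMs hMs
    linarith [mul_sub c (s ^ γ) (M ^ γ), hp_nonneg M hM_pos.le]
  · have h : s ^ γ ≤ M ^ γ := Real.rpow_le_rpow hs hsM hγ.le
    exact (mul_nonpos_of_nonneg_of_nonpos hc.le (sub_nonpos.2 h)).trans (hp_nonneg s hs)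

lemma intervalIntegrable_div_sq_s15 {p : ℝ → ℝ} {ρ : ℝ} (hρ : 0 < ρ)
    (hp_cont : ContinuousOn p (Ici 0))
    (hp_int : IntegrableOn (fun s : ℝ => p s / s ^ 2) (Ioo 0 1)) :
    IntervalIntegrable (fun s : ℝ => p s / s ^ 2) volume 0 ρ := by
  have hsub : uIcc 1 ρ ⊆ Ioi 0 := fun x hx => (lt_min one_pos hρ).trans_le hx.1
  refine ((intervalIntegrable_iff_integrableOn_Ioo_of_le zero_le_one).2 hp_int).trans ?_
  exact ((hp_cont.mono fun x hx => mem_Ici.2 (hsub hx).le).div (continuousOn_pow 2)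
    fun x hx => pow_ne_zero 2 (hsub hx).ne').intervalIntegrable

lemma apply_half_div_two_le_Hpot {p : ℝ → ℝ} {ρ : ℝ} (hρ : 0 < ρ)
    (hp_mono : MonotoneOn p (Ici 0)) (hp_nonneg : ∀ s, 0 ≤ s → 0 ≤ p s)
    (hp_int : IntervalIntegrable (fun s : ℝ => p s / s ^ 2) volume 0 ρ) :
    p (ρ / 2) / 2 ≤ Hpot p ρ := by
  have hhalf : 0 ≤ ρ / 2 := by positivity
  have hlow : ∀ s ∈ Icc (ρ / 2) ρ, p (ρ / 2) / ρ ^ 2 ≤ p s / s ^ 2 := fun s hs =>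
    div_le_div₀ (hp_nonneg s (hhalf.trans hs.1)) (hp_mono hhalf (hhalf.trans hs.1) hs.1)
      (pow_pos (by linarith [hs.1]) 2) (pow_le_pow_left₀ (hhalf.trans hs.1) hs.2 2)
  have hsub : IntervalIntegrable (fun s : ℝ => p s / s ^ 2) volume (ρ / 2) ρ :=
    hp_int.mono_set (uIcc_subset_uIcc (mem_uIcc_of_le hhalf (by linarith)) right_mem_uIcc)
  have hint : p (ρ / 2) / (2 * ρ) ≤ ∫ s in (0 : ℝ)..ρ, p s / s ^ 2 :=
    calc p (ρ / 2) / (2 * ρ) = ∫ _ in ρ / 2..ρ, p (ρ / 2) / ρ ^ 2 := by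
          rw [intervalIntegral.integral_const, smul_eq_mul]; field_simp; ring
      _ ≤ ∫ s in ρ / 2..ρ, p s / s ^ 2 :=
          intervalIntegral.integral_mono_on (by linarith) intervalIntegrable_const hsub hlow
      _ ≤ ∫ s in (0 : ℝ)..ρ, p s / s ^ 2 :=
          intervalIntegral.integral_mono_interval hhalf (by linarith) le_rfl
            ((ae_restrict_mem measurableSet_Ioc).mono fun s hs =>
              div_nonneg (hp_nonneg s hs.1.le) (sq_nonneg s)) hp_int
  calc p (ρ / 2) / 2 = ρ * (p (ρ / 2) / (2 * ρ)) := by field_simp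
    _ ≤ Hpot p ρ := mul_le_mul_of_nonneg_left hint hρ.le

theorem stmt_15_general (γ a₀ : ℝ) (p p' : ℝ → ℝ)
    (hγ : 3 / 2 < γ) (ha₀ : 0 < a₀)
    (hp_cont : ContinuousOn p (Ici 0))
    (hp0 : p 0 = 0)
    (hp_deriv : ∀ x : ℝ, 0 < x → HasDerivAt p (p' x) x)
    (hp'_pos : ∀ x : ℝ, 0 < x → 0 < p' x)
    (hp_lim : Tendsto (fun ρ : ℝ => p' ρ / ρ ^ (γ - 1)) atTop (nhds a₀))
    (hp_int : IntegrableOn (fun s : ℝ => p s / s ^ 2) (Ioo 0 1)) :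
    ∃ c₁ c₂ : ℝ, 0 < c₁ ∧ 0 < c₂ ∧
      ∀ ρ : ℝ, 0 ≤ ρ → c₁ * ρ ^ γ - c₂ ≤ Hpot p ρ := by
  have hγ_pos : 0 < γ := by linarith
  have hp_mono : MonotoneOn p (Ici 0) :=
    monotoneOn_of_hasDerivWithinAt_nonneg (convex_Ici 0) hp_cont
      (fun x hx => (hp_deriv x (by simpa using hx)).hasDerivWithinAt)
      (fun x hx => (hp'_pos x (by simpa using hx)).le)
  have hp_nonneg : ∀ s, 0 ≤ s → 0 ≤ p s := fun s hs => hp0 ▸ hp_mono (mem_Ici.2 le_rfl) hs hs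
  obtain ⟨c, hc, M, hM, hp_ge⟩ := exists_mul_rpow_sub_rpow_le hγ_pos ha₀ hp_nonneg hp_deriv hp_lim
  refine ⟨c / (2 * 2 ^ γ), c * M ^ γ / 2, by positivity, by positivity, fun ρ hρ => ?_⟩
  rcases hρ.eq_or_lt with rfl | hρ
  · simp only [Hpot, zero_mul, Real.zero_rpow hγ_pos.ne', mul_zero, zero_sub, neg_nonpos]
    positivity
  calc c / (2 * 2 ^ γ) * ρ ^ γ - c * M ^ γ / 2 = c * ((ρ / 2) ^ γ - M ^ γ) / 2 := by
        rw [Real.div_rpow hρ.le zero_le_two]; ring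
    _ ≤ p (ρ / 2) / 2 := by gcongr; exact hp_ge _ (by positivity)
    _ ≤ Hpot p ρ := apply_half_div_two_le_Hpot hρ hp_mono hp_nonneg
        (intervalIntegrable_div_sq_s15 hρ hp_cont hp_int)

/-- Coercivity of the pressure potential: `H(ρ) ≥ c₁ ρ^γ − c₂` for all `ρ ≥ 0`. -/
theorem stmt_15 (γ a₀ : ℝ) (p p' : ℝ → ℝ)
    (hγ : 3 / 2 < γ) (ha₀ : 0 < a₀)
    (hp_cont : ContinuousOn p (Ici 0))
    (hp0 : p 0 = 0)
    (hp_deriv : ∀ x : ℝ, 0 < x → HasDerivAt p (p' x) x)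
    (hp'_cont : ContinuousOn p' (Ioi 0))
    (hp'_pos : ∀ x : ℝ, 0 < x → 0 < p' x)
    (hp_lim : Tendsto (fun ρ : ℝ => p' ρ / ρ ^ (γ - 1)) atTop (nhds a₀))
    (hp_int : IntegrableOn (fun s : ℝ => p s / s ^ 2) (Ioo 0 1)) :
    ∃ c₁ c₂ : ℝ, 0 < c₁ ∧ 0 < c₂ ∧
      ∀ ρ : ℝ, 0 ≤ ρ → c₁ * ρ ^ γ - c₂ ≤ Hpot p ρ :=
  stmt_15_general γ a₀ p p' hγ ha₀ hp_cont hp0 hp_deriv hp'_pos hp_lim hp_int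
end
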